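/- Assume (H0) and d₁, d₂, l > 0, let k be a natural number, let ω > 0 satisfy the quartic equation ω⁴ + (A_k² − 2·B_k − b₁₁²)·ω² + B_k² − C_k² = 0, let j be a natural number, and set τ = (π − arcsin(S_k(ω)) + 2jπ)/ω. Then τ > 0 and λ = iω is a root of the characteristic equation λ² + A_k·λ + B_k + (−b₁₁·λ + C_k)·exp(−λτ) = 0. -/

import Mathlib

open Real

/-- Δ = M² − 4·K·(a·m + c·p)·(a·r₂ + c·d − c·r₀) with M = a·m + c·p + K·(a·r₂ + c·d). -/
noncomputable def Delta (r₀ r₂ K d a p c m : ℝ) : ℝ :=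
  (a*m + c*p + K*(a*r₂ + c*d))^2 - 4*K*(a*m + c*p)*(a*r₂ + c*d - c*r₀)

/-- The positive equilibrium predator density v⋆. -/
noncomputable def vstar (r₀ r₂ K d a p c m : ℝ) : ℝ :=
  (-(a*m + c*p + K*(a*r₂ + c*d)) + Real.sqrt (Delta r₀ r₂ K d a p c m)) / (2*K*(a*m + c*p))

/-- The positive equilibrium prey density u⋆ = (r₂ + m·v⋆)/c. -/
noncomputable def ustar (r₀ r₂ K d a p c m : ℝ) : ℝ := (r₂ + m * vstar r₀ r₂ K d a p c m) / c

/-- Linearization coefficient a₁₂. -/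
noncomputable def a12 (r₀ r₂ K d a p c m : ℝ) : ℝ :=
  -K*r₀*ustar r₀ r₂ K d a p c m / (1 + K*vstar r₀ r₂ K d a p c m)^2 - p*ustar r₀ r₂ K d a p c m

/-- Linearization coefficient a₂₁. -/
noncomputable def a21 (r₀ r₂ K d a p c m : ℝ) : ℝ := c * vstar r₀ r₂ K d a p c m

/-- Linearization coefficient a₂₂. -/
noncomputable def a22 (r₀ r₂ K d a p c m : ℝ) : ℝ := -m * vstar r₀ r₂ K d a p c m

/-- Linearization coefficient b₁₁. -/
noncomputable def b11 (r₀ r₂ K d a p c m : ℝ) : ℝ := -a * ustar r₀ r₂ K d a p c m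

/-- A_k = (d₁ + d₂)·k²/l² − a₂₂. -/
noncomputable def Ak (r₀ r₂ K d a p c m d₁ d₂ l : ℝ) (k : ℕ) : ℝ :=
  (d₁ + d₂)*(k:ℝ)^2/l^2 - a22 r₀ r₂ K d a p c m

/-- B_k = d₁·d₂·k⁴/l⁴ − a₂₂·d₁·k²/l² − a₁₂·a₂₁. -/
noncomputable def Bk (r₀ r₂ K d a p c m d₁ d₂ l : ℝ) (k : ℕ) : ℝ :=
  d₁*d₂*(k:ℝ)^4/l^4 - a22 r₀ r₂ K d a p c m * d₁*(k:ℝ)^2/l^2 - a12 r₀ r₂ K d a p c m * a21 r₀ r₂ K d a p c m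

/-- C_k = −b₁₁·d₂·k²/l² + a₂₂·b₁₁. -/
noncomputable def Ck (r₀ r₂ K d a p c m d₁ d₂ l : ℝ) (k : ℕ) : ℝ :=
  -(b11 r₀ r₂ K d a p c m)*d₂*(k:ℝ)^2/l^2 + a22 r₀ r₂ K d a p c m * b11 r₀ r₂ K d a p c m

/-- The characteristic equation at mode k with delay τ:
λ² + A_k·λ + B_k + (−b₁₁·λ + C_k)·exp(−λτ) = 0. -/
def charEq (r₀ r₂ K d a p c m d₁ d₂ l : ℝ) (k : ℕ) (τ : ℝ) (z : ℂ) : Prop :=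
  z^2 + (Ak r₀ r₂ K d a p c m d₁ d₂ l k : ℂ)*z + (Bk r₀ r₂ K d a p c m d₁ d₂ l k : ℂ)
    + (-(b11 r₀ r₂ K d a p c m : ℂ)*z + (Ck r₀ r₂ K d a p c m d₁ d₂ l k : ℂ)) * Complex.exp (-z*(τ:ℂ)) = 0

/-- Ĉ_k(ω) = (d₁·b₁₁·ω²·k²/l² − B_k·C_k)/(b₁₁²·ω² + C_k²). -/
noncomputable def Chat (r₀ r₂ K d a p c m d₁ d₂ l : ℝ) (k : ℕ) (ω : ℝ) : ℝ :=
  (d₁ * b11 r₀ r₂ K d a p c m * ω^2 * (k:ℝ)^2/l^2 - Bk r₀ r₂ K d a p c m d₁ d₂ l k * Ck r₀ r₂ K d a p c m d₁ d₂ l k) /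
    ((b11 r₀ r₂ K d a p c m)^2*ω^2 + (Ck r₀ r₂ K d a p c m d₁ d₂ l k)^2)

/-- S_k(ω) = (A_k·C_k·ω + B_k·b₁₁·ω − b₁₁·ω³)/(b₁₁²·ω² + C_k²). -/
noncomputable def Sk (r₀ r₂ K d a p c m d₁ d₂ l : ℝ) (k : ℕ) (ω : ℝ) : ℝ :=
  (Ak r₀ r₂ K d a p c m d₁ d₂ l k * Ck r₀ r₂ K d a p c m d₁ d₂ l k * ω + Bk r₀ r₂ K d a p c m d₁ d₂ l k * b11 r₀ r₂ K d a p c m * ω - b11 r₀ r₂ K d a p c m * ω^3) /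
    ((b11 r₀ r₂ K d a p c m)^2*ω^2 + (Ck r₀ r₂ K d a p c m d₁ d₂ l k)^2)

/-!
At `λ = iω` the characteristic equation says `exp (-iωτ) = (ω² - B - iAω) / (C - ibω)`. The
right-hand side is `Ĉ_k(ω) - i S_k(ω)`, and the quartic in `ω` says exactly that it has modulus
one, so `ωτ = π - arcsin S_k + 2jπ` realises it as soon as `Ĉ_k ≤ 0`. At the positive
equilibrium guaranteed by (H0) one has `b₁₁ < 0`, `B_k > 0` and `C_k > 0`, which makes the numerator `d₁ b₁₁ ω² k² / l² - B_k C_k` of `Ĉ_k` negative.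
-/

namespace Real

theorem sin_pi_sub_arcsin_add_two_pi_mul {s : ℝ} (hs₁ : -1 ≤ s) (hs₂ : s ≤ 1) (j : ℕ) :
    sin (π - arcsin s + 2 * j * π) = s := by
  rw [show π - arcsin s + 2 * j * π = π - arcsin s + j * (2 * π) by ring,
    sin_add_nat_mul_two_pi, sin_pi_sub, sin_arcsin hs₁ hs₂]

theorem cos_pi_sub_arcsin_add_two_pi_mul (s : ℝ) (j : ℕ) :
    cos (π - arcsin s + 2 * j * π) = -√(1 - s ^ 2) := by
  rw [show π - arcsin s + 2 * j * π = π - arcsin s + j * (2 * π) by ring,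
    cos_add_nat_mul_two_pi, cos_pi_sub, cos_arcsin]

end Real

section CharacteristicEquation

variable {A B C b ω τ : ℝ}

theorem exp_neg_I_mul_mul (ω τ : ℝ) :
    Complex.exp (-(Complex.I * ω) * τ) = cos (ω * τ) - sin (ω * τ) * Complex.I := by
  rw [show -(Complex.I * ω) * τ = ((-(ω * τ) : ℝ) : ℂ) * Complex.I by push_cast; ring,
    Complex.exp_mul_I, ← Complex.ofReal_cos, ← Complex.ofReal_sin, cos_neg, sin_neg]
  push_cast
  ring

theorem charPoly_I_mul_eq_zero_of_cos_sin (hD : b ^ 2 * ω ^ 2 + C ^ 2 ≠ 0)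
    (hcos : cos (ω * τ) = (C * (ω ^ 2 - B) + A * b * ω ^ 2) / (b ^ 2 * ω ^ 2 + C ^ 2))
    (hsin : sin (ω * τ) = (A * C * ω + B * b * ω - b * ω ^ 3) / (b ^ 2 * ω ^ 2 + C ^ 2)) :
    (Complex.I * ω) ^ 2 + A * (Complex.I * ω) + B
      + (-b * (Complex.I * ω) + C) * Complex.exp (-(Complex.I * ω) * τ) = 0 := by
  have hre : C * cos (ω * τ) - b * ω * sin (ω * τ) = ω ^ 2 - B := by
    rw [hcos, hsin, mul_div_assoc', mul_div_assoc', div_sub_div_same, div_eq_iff hD]; ring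
  have him : C * sin (ω * τ) + b * ω * cos (ω * τ) = A * ω := by
    rw [hcos, hsin, mul_div_assoc', mul_div_assoc', ← add_div, div_eq_iff hD]; ring
  have hreC : (C : ℂ) * cos (ω * τ) - b * ω * sin (ω * τ) = ω ^ 2 - B := by exact_mod_cast hre
  have himC : (C : ℂ) * sin (ω * τ) + b * ω * cos (ω * τ) = A * ω := by exact_mod_cast him
  rw [exp_neg_I_mul_mul]
  linear_combination hreC - Complex.I * himC
    + (ω ^ 2 + b * ω * (sin (ω * τ) : ℂ)) * Complex.I_sq

theorem sq_add_sq_eq_one_of_quartic (hD : b ^ 2 * ω ^ 2 + C ^ 2 ≠ 0)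
    (hq : ω ^ 4 + (A ^ 2 - 2 * B - b ^ 2) * ω ^ 2 + B ^ 2 - C ^ 2 = 0) :
    ((A * C * ω + B * b * ω - b * ω ^ 3) / (b ^ 2 * ω ^ 2 + C ^ 2)) ^ 2
      + ((C * (ω ^ 2 - B) + A * b * ω ^ 2) / (b ^ 2 * ω ^ 2 + C ^ 2)) ^ 2 = 1 := by
  rw [div_pow, div_pow, ← add_div, div_eq_one_iff_eq (pow_ne_zero 2 hD)]
  linear_combination (b ^ 2 * ω ^ 2 + C ^ 2) * hq

theorem charPoly_I_mul_eq_zero_of_quartic (hω : 0 < ω) (hD : 0 < b ^ 2 * ω ^ 2 + C ^ 2)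
    (hcos : (C * (ω ^ 2 - B) + A * b * ω ^ 2) / (b ^ 2 * ω ^ 2 + C ^ 2) ≤ 0)
    (hq : ω ^ 4 + (A ^ 2 - 2 * B - b ^ 2) * ω ^ 2 + B ^ 2 - C ^ 2 = 0) (j : ℕ)
    (hτ : τ = (π - arcsin ((A * C * ω + B * b * ω - b * ω ^ 3) / (b ^ 2 * ω ^ 2 + C ^ 2))
      + 2 * j * π) / ω) :
    0 < τ ∧ (Complex.I * ω) ^ 2 + A * (Complex.I * ω) + B
      + (-b * (Complex.I * ω) + C) * Complex.exp (-(Complex.I * ω) * τ) = 0 := by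
  set S := (A * C * ω + B * b * ω - b * ω ^ 3) / (b ^ 2 * ω ^ 2 + C ^ 2)
  set x := (C * (ω ^ 2 - B) + A * b * ω ^ 2) / (b ^ 2 * ω ^ 2 + C ^ 2)
  have hSx : S ^ 2 + x ^ 2 = 1 := sq_add_sq_eq_one_of_quartic hD.ne' hq
  have hS : S ^ 2 ≤ 1 := by nlinarith [sq_nonneg x]
  have hωτ : ω * τ = π - arcsin S + 2 * j * π := by
    rw [hτ, mul_div_cancel₀ _ hω.ne']
  refine ⟨?_, charPoly_I_mul_eq_zero_of_cos_sin hD.ne' ?_ ?_⟩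
  · rw [hτ]
    have := arcsin_le_pi_div_two S
    have : (0 : ℝ) ≤ 2 * j * π := by positivity
    exact div_pos (by linarith [pi_pos]) hω
  · rw [hωτ, cos_pi_sub_arcsin_add_two_pi_mul, show 1 - S ^ 2 = x ^ 2 by linarith,
      sqrt_sq_eq_abs, abs_of_nonpos hcos, neg_neg]
  · rw [hωτ, sin_pi_sub_arcsin_add_two_pi_mul (by nlinarith) (by nlinarith)]

end CharacteristicEquation

section Equilibrium

variable {r₀ r₂ K d a p c m : ℝ}

theorem sq_lt_Delta (hK : 0 < K) (ha : 0 < a) (hp : 0 < p) (hc : 0 < c) (hm : 0 < m)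
    (hH0 : a * r₂ + c * d - c * r₀ < 0) :
    (a * m + c * p + K * (a * r₂ + c * d)) ^ 2 < Delta r₀ r₂ K d a p c m := by
  have : 4 * K * (a * m + c * p) * (a * r₂ + c * d - c * r₀) < 0 :=
    mul_neg_of_pos_of_neg (by positivity) hH0
  unfold Delta
  linarith

theorem vstar_pos (hK : 0 < K) (ha : 0 < a) (hp : 0 < p) (hc : 0 < c) (hm : 0 < m)
    (hH0 : a * r₂ + c * d - c * r₀ < 0) : 0 < vstar r₀ r₂ K d a p c m := by
  have := lt_sqrt_of_sq_lt (sq_lt_Delta hK ha hp hc hm hH0)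
  exact div_pos (by linarith) (by positivity)

end Equilibrium

section Linearization

variable {r₀ r₂ K d a p c m d₁ d₂ l : ℝ} {k : ℕ} {ω : ℝ}

theorem ustar_pos (hr₂ : 0 < r₂) (hc : 0 < c) (hm : 0 < m)
    (hv : 0 < vstar r₀ r₂ K d a p c m) : 0 < ustar r₀ r₂ K d a p c m :=
  div_pos (by positivity) hc

theorem b11_neg (ha : 0 < a) (hu : 0 < ustar r₀ r₂ K d a p c m) : b11 r₀ r₂ K d a p c m < 0 := by
  rw [b11, neg_mul]
  exact neg_neg_of_pos (mul_pos ha hu)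

theorem a22_neg (hm : 0 < m) (hv : 0 < vstar r₀ r₂ K d a p c m) : a22 r₀ r₂ K d a p c m < 0 := by
  rw [a22, neg_mul]
  exact neg_neg_of_pos (mul_pos hm hv)

theorem a21_pos (hc : 0 < c) (hv : 0 < vstar r₀ r₂ K d a p c m) : 0 < a21 r₀ r₂ K d a p c m :=
  mul_pos hc hv

theorem a12_neg (hr₀ : 0 < r₀) (hK : 0 < K) (hp : 0 < p) (hu : 0 < ustar r₀ r₂ K d a p c m)
    (hv : 0 < vstar r₀ r₂ K d a p c m) : a12 r₀ r₂ K d a p c m < 0 := by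
  have : 0 < K * r₀ * ustar r₀ r₂ K d a p c m / (1 + K * vstar r₀ r₂ K d a p c m) ^ 2 := by
    positivity
  rw [a12, neg_mul, neg_mul, neg_div]
  linarith [mul_pos hp hu]

theorem Bk_pos (hd₁ : 0 < d₁) (hd₂ : 0 < d₂) (h22 : a22 r₀ r₂ K d a p c m < 0)
    (h12 : a12 r₀ r₂ K d a p c m < 0) (h21 : 0 < a21 r₀ r₂ K d a p c m) :
    0 < Bk r₀ r₂ K d a p c m d₁ d₂ l k := by
  have : a22 r₀ r₂ K d a p c m * d₁ * (k : ℝ) ^ 2 / l ^ 2 ≤ 0 := by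
    have := neg_pos.2 h22
    rw [← neg_nonneg, ← neg_div, ← neg_mul, ← neg_mul]
    positivity
  have : 0 ≤ d₁ * d₂ * (k : ℝ) ^ 4 / l ^ 4 := by positivity
  rw [Bk]
  linarith [mul_neg_of_neg_of_pos h12 h21]

theorem Ck_pos (hd₂ : 0 < d₂) (hb : b11 r₀ r₂ K d a p c m < 0) (h22 : a22 r₀ r₂ K d a p c m < 0) :
    0 < Ck r₀ r₂ K d a p c m d₁ d₂ l k := by
  have : 0 ≤ -b11 r₀ r₂ K d a p c m * d₂ * (k : ℝ) ^ 2 / l ^ 2 := by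
    have := neg_pos.2 hb
    positivity
  rw [Ck]
  linarith [mul_pos_of_neg_of_neg h22 hb]

theorem Chat_eq : Chat r₀ r₂ K d a p c m d₁ d₂ l k ω =
    (Ck r₀ r₂ K d a p c m d₁ d₂ l k * (ω ^ 2 - Bk r₀ r₂ K d a p c m d₁ d₂ l k)
      + Ak r₀ r₂ K d a p c m d₁ d₂ l k * b11 r₀ r₂ K d a p c m * ω ^ 2)
      / (b11 r₀ r₂ K d a p c m ^ 2 * ω ^ 2 + Ck r₀ r₂ K d a p c m d₁ d₂ l k ^ 2) := by
  rw [Chat, Ak, Ck]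
  ring

theorem Chat_nonpos (hd₁ : 0 < d₁) (hb : b11 r₀ r₂ K d a p c m < 0)
    (hB : 0 < Bk r₀ r₂ K d a p c m d₁ d₂ l k) (hC : 0 < Ck r₀ r₂ K d a p c m d₁ d₂ l k) :
    Chat r₀ r₂ K d a p c m d₁ d₂ l k ω ≤ 0 := by
  have : d₁ * b11 r₀ r₂ K d a p c m * ω ^ 2 * (k : ℝ) ^ 2 / l ^ 2 ≤ 0 := by
    have := neg_pos.2 hb
    rw [← neg_nonneg, ← neg_div, ← neg_mul, ← neg_mul, ← mul_neg]
    positivity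
  exact div_nonpos_of_nonpos_of_nonneg (by linarith [mul_pos hB hC]) (by positivity)

end Linearization

theorem stmt13_general (r₀ r₂ K d a p c m d₁ d₂ l : ℝ) (hr₀ : 0 < r₀) (hr₂ : 0 < r₂) (hK : 0 < K) (ha : 0 < a) (hp : 0 < p) (hc : 0 < c) (hm : 0 < m)
    (hd₁ : 0 < d₁) (hd₂ : 0 < d₂)
    (hH0 : a*r₂ + c*d - c*r₀ < 0) (k : ℕ) (ω : ℝ) (hω : 0 < ω)
    (hq : ω^4 + ((Ak r₀ r₂ K d a p c m d₁ d₂ l k)^2 - 2*Bk r₀ r₂ K d a p c m d₁ d₂ l k - (b11 r₀ r₂ K d a p c m)^2)*ω^2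
      + (Bk r₀ r₂ K d a p c m d₁ d₂ l k)^2 - (Ck r₀ r₂ K d a p c m d₁ d₂ l k)^2 = 0)
    (j : ℕ) (τ : ℝ)
    (hτ : τ = (Real.pi - Real.arcsin (Sk r₀ r₂ K d a p c m d₁ d₂ l k ω) + 2*(j:ℝ)*Real.pi) / ω) :
    0 < τ ∧ charEq r₀ r₂ K d a p c m d₁ d₂ l k τ (Complex.I * (ω : ℂ)) := by
  have hv := vstar_pos hK ha hp hc hm hH0
  have hu := ustar_pos hr₂ hc hm hv
  have hb := b11_neg ha hu
  have h22 := a22_neg hm hv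
  have hB : 0 < Bk r₀ r₂ K d a p c m d₁ d₂ l k :=
    Bk_pos hd₁ hd₂ h22 (a12_neg hr₀ hK hp hu hv) (a21_pos hc hv)
  have hC : 0 < Ck r₀ r₂ K d a p c m d₁ d₂ l k := Ck_pos hd₂ hb h22
  have hD : 0 < b11 r₀ r₂ K d a p c m ^ 2 * ω ^ 2 + Ck r₀ r₂ K d a p c m d₁ d₂ l k ^ 2 := by
    have := hb.ne
    positivity
  have hcos := Chat_nonpos (ω := ω) hd₁ hb hB hC
  rw [Chat_eq] at hcos
  exact charPoly_I_mul_eq_zero_of_quartic hω hD hcos hq j hτ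

theorem stmt13 (r₀ r₂ K d a p c m d₁ d₂ l : ℝ) (hr₀ : 0 < r₀) (hr₂ : 0 < r₂) (hK : 0 < K) (hd : 0 < d) (ha : 0 < a) (hp : 0 < p) (hc : 0 < c) (hm : 0 < m)
    (hd₁ : 0 < d₁) (hd₂ : 0 < d₂) (hl : 0 < l)
    (hH0 : a*r₂ + c*d - c*r₀ < 0) (k : ℕ) (ω : ℝ) (hω : 0 < ω)
    (hq : ω^4 + ((Ak r₀ r₂ K d a p c m d₁ d₂ l k)^2 - 2*Bk r₀ r₂ K d a p c m d₁ d₂ l k - (b11 r₀ r₂ K d a p c m)^2)*ω^2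
      + (Bk r₀ r₂ K d a p c m d₁ d₂ l k)^2 - (Ck r₀ r₂ K d a p c m d₁ d₂ l k)^2 = 0)
    (j : ℕ) (τ : ℝ)
    (hτ : τ = (Real.pi - Real.arcsin (Sk r₀ r₂ K d a p c m d₁ d₂ l k ω) + 2*(j:ℝ)*Real.pi) / ω) :
    0 < τ ∧ charEq r₀ r₂ K d a p c m d₁ d₂ l k τ (Complex.I * (ω : ℂ)) :=
  stmt13_general r₀ r₂ K d a p c m d₁ d₂ l hr₀ hr₂ hK ha hp hc hm hd₁ hd₂ hH0 k ω hω hq j τ hτ
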